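/- arXiv:1611.07499 — 6 statements merged into one kernel-verified Lean document; each statement's English description precedes it below -/
import Mathlib

section
/- Let k > 0, ν > −k, and c ∈ ℝ. Then the generalized k-Bessel function y(x) = W^k_{ν,c}(x) satisfies, for all x > 0, the second-order differential equation y''(x) + x^{−1} y'(x) + (1/k²)(ck − ν²/x²) y(x) = 0. -/
/-!
Put `t = x / 2`, `μ = ν / k` and `a_n = (-c)^n / (Γ_k(nk + ν + k) n!)`, so that
`W(x) = t^μ F(t²)` with `F(u) = ∑ a_n u^n`. The functional equation `Γ_k(x + k) = x Γ_k(x)`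
gives the recursion `(n + 1)(n + 1 + μ) a_{n+1} = -(c/k) a_n`; it makes the coefficients decay
faster than any geometric sequence, so `F` is entire and may be differentiated termwise, and
coefficientwise it is the Bessel–Clifford equation `u F'' + (μ + 1) F' + (c/k) F = 0`.
The substitution `u = t²` turns that equation into the stated one for `t^μ F(t²)`.
-/

open Real

/-- The k-gamma function, `Γ_k(x) = k^(x/k - 1) * Γ(x/k)`. -/
noncomputable def kGamma (k x : ℝ) : ℝ := k ^ (x / k - 1) * Real.Gamma (x / k)

/-- The generalized k-Bessel function `W^k_{ν,c}(x)`. -/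
noncomputable def kBesselW (k ν c x : ℝ) : ℝ :=
  ∑' r : ℕ, (-c) ^ r / (kGamma k (r * k + ν + k) * (r.factorial : ℝ)) *
    (x / 2) ^ (2 * (r : ℝ) + ν / k)

open Filter Topology

section PowerSeries

variable {𝕜 : Type*} [RCLike 𝕜]

def HasInfiniteRadius (a : ℕ → 𝕜) : Prop :=
  ∀ R : ℝ, 0 ≤ R → Summable fun n => ‖a n‖ * R ^ n

def derivCoeff (a : ℕ → 𝕜) (n : ℕ) : 𝕜 := (n + 1) * a (n + 1)

lemma norm_derivCoeff (a : ℕ → 𝕜) (n : ℕ) : ‖derivCoeff a n‖ = (n + 1) * ‖a (n + 1)‖ := by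
  rw [derivCoeff, norm_mul, ← Nat.cast_succ, RCLike.norm_natCast, Nat.cast_succ]

lemma HasInfiniteRadius.summable {a : ℕ → 𝕜} (ha : HasInfiniteRadius a) (u : 𝕜) :
    Summable fun n => a n * u ^ n :=
  (ha ‖u‖ (norm_nonneg u)).of_norm_bounded fun n => by rw [norm_mul, norm_pow]

lemma hasInfiniteRadius_derivCoeff {a : ℕ → 𝕜} (ha : HasInfiniteRadius a) :
    HasInfiniteRadius (derivCoeff a) := by
  intro R hR
  have hsum : Summable fun n => ‖a (n + 1)‖ * (2 * R + 1) ^ (n + 1) :=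
    (summable_nat_add_iff 1).mpr (ha _ (by positivity))
  refine hsum.of_nonneg_of_le (fun n => by positivity) fun n => ?_
  -- `n + 1 ≤ 2 ^ n`, so the factor `n + 1` is absorbed by doubling the radius
  have hn : (n + 1 : ℝ) * R ^ n ≤ (2 * R + 1) ^ (n + 1) :=
    calc (n + 1 : ℝ) * R ^ n ≤ 2 ^ n * R ^ n := by
          gcongr; exact_mod_cast Nat.lt_two_pow_self
      _ = (2 * R) ^ n := (mul_pow _ _ _).symm
      _ ≤ (2 * R + 1) ^ n := by gcongr; linarith
      _ ≤ (2 * R + 1) ^ (n + 1) := pow_le_pow_right₀ (by linarith) n.le_succ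
  rw [norm_derivCoeff, mul_comm _ ‖a (n + 1)‖, mul_assoc]
  exact mul_le_mul_of_nonneg_left hn (norm_nonneg _)

lemma HasInfiniteRadius.hasDerivAt_tsum {a : ℕ → 𝕜} (ha : HasInfiniteRadius a) (y : 𝕜) :
    HasDerivAt (fun u => ∑' n, a n * u ^ n) (∑' n, derivCoeff a n * y ^ n) y := by
  set R := ‖y‖ + 1
  have ha' := hasInfiniteRadius_derivCoeff ha
  have hsum : Summable fun n => ‖a n‖ * (n * R ^ (n - 1)) := by
    refine (summable_nat_add_iff 1).mp ((ha' R (by positivity)).congr fun n => ?_)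
    simp only [norm_derivCoeff, Nat.cast_succ, Nat.add_sub_cancel]
    ring
  have hbound : ∀ n, ∀ v ∈ Metric.ball (0 : 𝕜) R, ‖a n * (n * v ^ (n - 1))‖ ≤
      ‖a n‖ * (n * R ^ (n - 1)) := fun n v hv => by
    rw [norm_mul, norm_mul, norm_pow, RCLike.norm_natCast]
    gcongr
    exact (mem_ball_zero_iff.mp hv).le
  refine (hasDerivAt_tsum_of_isPreconnected hsum Metric.isOpen_ball
    (convex_ball (0 : 𝕜) R).isPreconnected (fun n u _ => (hasDerivAt_pow n u).const_mul (a n))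
    hbound (Metric.mem_ball_self (by positivity)) (ha.summable 0)
    (mem_ball_zero_iff.mpr (lt_add_one ‖y‖))).congr_deriv ?_
  rw [tsum_eq_zero_add' ((ha'.summable y).congr fun n => by
    rw [derivCoeff, Nat.cast_succ, Nat.add_sub_cancel]; ring)]
  simp only [Nat.cast_zero, zero_mul, mul_zero, zero_add, Nat.cast_succ, Nat.add_sub_cancel]
  exact tsum_congr fun n => by rw [derivCoeff]; ring

lemma hasInfiniteRadius_of_mul_norm_succ_le {a : ℕ → 𝕜} {d : ℕ → ℝ} (C : ℝ)
    (hd : Tendsto d atTop atTop) (h : ∀ n, d n * ‖a (n + 1)‖ ≤ C * ‖a n‖) :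
    HasInfiniteRadius a := by
  intro R hR
  refine summable_of_ratio_norm_eventually_le (r := 1 / 2) (by norm_num) ?_
  filter_upwards [hd.eventually_ge_atTop (2 * |C| * R + 1)] with n hn
  have hpos : 0 < d n := by linarith [show 0 ≤ 2 * |C| * R by positivity]
  have hratio : ‖a (n + 1)‖ * R ≤ 1 / 2 * ‖a n‖ := by
    refine le_of_mul_le_mul_left ?_ hpos
    calc d n * (‖a (n + 1)‖ * R) ≤ |C| * ‖a n‖ * R := by
          rw [← mul_assoc]
          exact mul_le_mul_of_nonneg_right ((h n).trans (by gcongr; exact le_abs_self C)) hR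
      _ ≤ d n * (1 / 2 * ‖a n‖) := by nlinarith [norm_nonneg (a n)]
  rw [Real.norm_of_nonneg (by positivity), Real.norm_of_nonneg (by positivity), pow_succ]
  calc ‖a (n + 1)‖ * (R ^ n * R) = ‖a (n + 1)‖ * R * R ^ n := by ring
    _ ≤ 1 / 2 * ‖a n‖ * R ^ n := by gcongr
    _ = 1 / 2 * (‖a n‖ * R ^ n) := by ring

lemma hasSum_natCast_mul_mul_pow {b : ℕ → 𝕜} {u : 𝕜}
    (hb : Summable fun n => derivCoeff b n * u ^ n) :
    HasSum (fun n => n * b n * u ^ n) (u * ∑' n, derivCoeff b n * u ^ n) := by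
  refine (hasSum_nat_add_iff' 1).mp ?_
  rw [Finset.sum_range_one, Nat.cast_zero, zero_mul, zero_mul, sub_zero]
  have hterm : (fun n : ℕ => ((n + 1 : ℕ) : 𝕜) * b (n + 1) * u ^ (n + 1)) =
      fun n => u * (derivCoeff b n * u ^ n) := by
    funext n
    rw [derivCoeff, Nat.cast_succ]
    ring
  exact hterm ▸ hb.hasSum.mul_left u

lemma hasInfiniteRadius_of_besselClifford_rec {a : ℕ → 𝕜} {μ κ : 𝕜}
    (hrec : ∀ n : ℕ, (n + 1) * (n + 1 + μ) * a (n + 1) = -κ * a n) : HasInfiniteRadius a := by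
  refine hasInfiniteRadius_of_mul_norm_succ_le (d := fun n => ‖((n + 1) * (n + 1 + μ) : 𝕜)‖) ‖κ‖
    ?_ fun n => by rw [← norm_mul, hrec n, norm_mul, norm_neg]
  refine tendsto_atTop_mono (fun n => ?_)
    (tendsto_atTop_add_const_right _ (1 - ‖μ‖) tendsto_natCast_atTop_atTop)
  have h1 : (1 : ℝ) ≤ ‖(n + 1 : 𝕜)‖ := by
    rw [← Nat.cast_succ, RCLike.norm_natCast]; exact_mod_cast n.succ_pos
  have h2 : (n : ℝ) + 1 - ‖μ‖ ≤ ‖(n + 1 + μ : 𝕜)‖ := by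
    have := norm_sub_norm_le (n + 1 : 𝕜) (-μ)
    rwa [sub_neg_eq_add, norm_neg, ← Nat.cast_succ, RCLike.norm_natCast, Nat.cast_succ,
      Nat.cast_succ] at this
  rw [norm_mul]
  nlinarith [norm_nonneg (n + 1 + μ : 𝕜)]

theorem tsum_mul_pow_besselClifford_ode {a : ℕ → 𝕜} {μ κ : 𝕜}
    (hrec : ∀ n : ℕ, (n + 1) * (n + 1 + μ) * a (n + 1) = -κ * a n) (u : 𝕜) :
    u * ∑' n, derivCoeff (derivCoeff a) n * u ^ n + (μ + 1) * ∑' n, derivCoeff a n * u ^ n +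
      κ * ∑' n, a n * u ^ n = 0 := by
  have ha := hasInfiniteRadius_of_besselClifford_rec hrec
  have ha' := hasInfiniteRadius_derivCoeff ha
  have hsum := ((hasSum_natCast_mul_mul_pow ((hasInfiniteRadius_derivCoeff ha').summable u)).add
    ((ha'.summable u).hasSum.mul_left (μ + 1))).add ((ha.summable u).hasSum.mul_left κ)
  refine hsum.unique ?_
  convert hasSum_zero with n
  rw [derivCoeff]
  linear_combination u ^ n * hrec n

end PowerSeries

lemma hasDerivAt_half_rpow (p : ℝ) {x : ℝ} (hx : 0 < x) :
    HasDerivAt (fun x => (x / 2) ^ p) (p / 2 * (x / 2) ^ (p - 1)) x :=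
  (((hasDerivAt_id' x).div_const 2).rpow_const (Or.inl (by positivity))).congr_deriv (by ring)

lemma hasDerivAt_half_sq (x : ℝ) : HasDerivAt (fun x => (x / 2) ^ 2) (x / 2) x :=
  (((hasDerivAt_id' x).div_const 2).pow 2).congr_deriv (by ring)

theorem bessel_ode_of_besselClifford_ode {F F' F'' : ℝ → ℝ} {μ κ x : ℝ}
    (hF : ∀ u, 0 < u → HasDerivAt F (F' u) u) (hF' : ∀ u, 0 < u → HasDerivAt F' (F'' u) u)
    (hode : ∀ u, 0 < u → u * F'' u + (μ + 1) * F' u + κ * F u = 0) (hx : 0 < x) :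
    deriv (deriv fun x => (x / 2) ^ μ * F ((x / 2) ^ 2)) x +
      x⁻¹ * deriv (fun x => (x / 2) ^ μ * F ((x / 2) ^ 2)) x +
      (κ - μ ^ 2 / x ^ 2) * ((x / 2) ^ μ * F ((x / 2) ^ 2)) = 0 := by
  have hsq : ∀ x : ℝ, 0 < x → 0 < (x / 2) ^ 2 := fun x hx => by positivity
  have hy' : ∀ x, 0 < x → HasDerivAt (fun x => (x / 2) ^ μ * F ((x / 2) ^ 2))
      (μ / 2 * (x / 2) ^ (μ - 1) * F ((x / 2) ^ 2) + (x / 2) ^ μ * (F' ((x / 2) ^ 2) * (x / 2)))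
      x := fun x hx =>
    (hasDerivAt_half_rpow μ hx).mul ((hF _ (hsq x hx)).comp x (hasDerivAt_half_sq x))
  have hy'' := (((hasDerivAt_half_rpow (μ - 1) hx).const_mul (μ / 2)).mul
      ((hF _ (hsq x hx)).comp x (hasDerivAt_half_sq x))).add
    ((hasDerivAt_half_rpow μ hx).mul
      (((hF' _ (hsq x hx)).comp x (hasDerivAt_half_sq x)).mul ((hasDerivAt_id' x).div_const 2)))
  have hderiv : deriv (fun x => (x / 2) ^ μ * F ((x / 2) ^ 2)) =ᶠ[𝓝 x]
      fun x => μ / 2 * (x / 2) ^ (μ - 1) * F ((x / 2) ^ 2) +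
        (x / 2) ^ μ * (F' ((x / 2) ^ 2) * (x / 2)) := by
    filter_upwards [Ioi_mem_nhds hx] with z hz using (hy' z hz).deriv
  rw [hderiv.deriv_eq.trans hy''.deriv, (hy' x hx).deriv]
  have hx2 : 0 < x / 2 := by positivity
  simp only [Real.rpow_sub_one hx2.ne', Function.comp_apply, Pi.mul_apply]
  -- the left side is `(x / 2) ^ μ` times the Bessel–Clifford expression at `u = (x / 2) ^ 2`
  have h := hode _ (hsq x hx)
  generalize hu : (x / 2) ^ 2 = u at h ⊢
  generalize (x / 2) ^ μ = P
  field_simp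
  linear_combination (4 * x ^ 2 * P) * h + 4 * x ^ 2 * P * F'' u * hu

lemma kGamma_add {k x : ℝ} (hk : k ≠ 0) (hx : x ≠ 0) : kGamma k (x + k) = x * kGamma k x := by
  rw [kGamma, kGamma, add_div, div_self hk, add_sub_cancel_right,
    Real.Gamma_add_one (div_ne_zero hx hk), ← sub_add_cancel (x / k) 1, Real.rpow_add_one hk,
    sub_add_cancel]
  field_simp

lemma kGamma_zero (k : ℝ) : kGamma k 0 = 0 := by
  rw [kGamma, zero_div, Real.Gamma_zero, mul_zero]

noncomputable def kBesselCoeff (k ν c : ℝ) (r : ℕ) : ℝ :=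
  (-c) ^ r / (kGamma k (r * k + ν + k) * r.factorial)

lemma kBesselCoeff_succ {k : ℝ} (hk : k ≠ 0) (ν c : ℝ) (n : ℕ) :
    (n + 1) * (n + 1 + ν / k) * kBesselCoeff k ν c (n + 1) = -(c / k) * kBesselCoeff k ν c n := by
  have harg : ((n + 1 : ℕ) : ℝ) * k + ν + k = (n * k + ν + k) + k := by push_cast; ring
  have hμ : (n + 1 + ν / k : ℝ) = (n * k + ν + k) / k := by field_simp; ring
  rw [kBesselCoeff, kBesselCoeff, harg, hμ, Nat.factorial_succ, Nat.cast_mul]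
  generalize (n : ℝ) * k + ν + k = x
  -- both sides vanish at the zeros of `kGamma`, the poles of `Γ` included
  rcases eq_or_ne x 0 with rfl | hx
  · simp [kGamma_zero]
  rw [kGamma_add hk hx]
  rcases eq_or_ne (kGamma k x) 0 with hG | hG
  · simp [hG]
  field_simp
  push_cast
  ring

lemma kBesselW_eq {k ν c x : ℝ} (hx : 0 < x) :
    kBesselW k ν c x = (x / 2) ^ (ν / k) * ∑' n, kBesselCoeff k ν c n * ((x / 2) ^ 2) ^ n := by
  rw [kBesselW, ← tsum_mul_left]
  refine tsum_congr fun n => ?_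
  rw [Real.rpow_add (by positivity), Real.rpow_mul (by positivity), Real.rpow_two,
    Real.rpow_natCast, kBesselCoeff]
  ring

theorem kBessel_ode_general (k ν c : ℝ) (hk : 0 < k) (x : ℝ) (hx : 0 < x) :
    deriv (deriv (kBesselW k ν c)) x + x⁻¹ * deriv (kBesselW k ν c) x +
      (1 / k ^ 2) * (c * k - ν ^ 2 / x ^ 2) * kBesselW k ν c x = 0 := by
  have hrec := kBesselCoeff_succ hk.ne' ν c
  have ha := hasInfiniteRadius_of_besselClifford_rec hrec
  have hW : kBesselW k ν c =ᶠ[𝓝 x]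
      fun x => (x / 2) ^ (ν / k) * ∑' n, kBesselCoeff k ν c n * ((x / 2) ^ 2) ^ n :=
    eventually_of_mem (Ioi_mem_nhds hx) fun y hy => kBesselW_eq hy
  rw [hW.deriv.deriv_eq, hW.deriv_eq, hW.eq_of_nhds]
  have hode := bessel_ode_of_besselClifford_ode
    (fun u _ => ha.hasDerivAt_tsum u)
    (fun u _ => (hasInfiniteRadius_derivCoeff ha).hasDerivAt_tsum u)
    (fun u _ => tsum_mul_pow_besselClifford_ode hrec u) hx
  convert hode using 3
  field_simp

theorem kBessel_ode (k ν c : ℝ) (hk : 0 < k) (hν : -k < ν) (x : ℝ) (hx : 0 < x) :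
    deriv (deriv (kBesselW k ν c)) x + x⁻¹ * deriv (kBesselW k ν c) x +
      (1 / k ^ 2) * (c * k - ν ^ 2 / x ^ 2) * kBesselW k ν c x = 0 :=
  kBessel_ode_general k ν c hk x hx
end

section
/- Let k > 0, ν > 0, and c ∈ ℝ. Then for all x > 0, the three-term recurrence 2ν W^k_{ν,c}(x) = x W^k_{ν−k,c}(x) + c k x W^k_{ν+k,c}(x) holds. -/
open Real

lemma kGamma_pos {k x : ℝ} (hk : 0 < k) (hx : 0 < x) : 0 < kGamma k x := by
  unfold kGamma
  exact mul_pos (Real.rpow_pos_of_pos hk _) (Real.Gamma_pos_of_pos (by positivity))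

lemma kGamma_add_k {k t : ℝ} (hk : 0 < k) (ht : 0 < t) :
    kGamma k (t + k) = t * kGamma k t := by
  unfold kGamma
  have hk' : k ≠ 0 := hk.ne'
  have h1 : (t + k) / k = t / k + 1 := by field_simp
  rw [h1, Real.Gamma_add_one (by positivity),
    show t / k + 1 - 1 = (t / k - 1) + 1 by ring, Real.rpow_add hk, Real.rpow_one]
  field_simp

lemma kBessel_summable_aux (k a c q : ℝ) (hk : 0 < k) (ha : 0 < a) :
    Summable (fun r : ℕ => (-c) ^ r / (kGamma k (r * k + a) * (r.factorial : ℝ)) * q ^ r) := by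
  set u : ℕ → ℝ := fun r => (-c) ^ r / (kGamma k (r * k + a) * (r.factorial : ℝ)) * q ^ r
    with hu
  have hpos : ∀ r : ℕ, 0 < kGamma k ((r : ℝ) * k + a) := fun r =>
    kGamma_pos hk (by positivity)
  have hstep : ∀ n : ℕ, u (n + 1) = u n * ((-c) * q / (((n : ℝ) * k + a) * ((n : ℝ) + 1))) := by
    intro n
    have h1 : (((n : ℕ) + 1 : ℕ) : ℝ) * k + a = ((n : ℝ) * k + a) + k := by push_cast; ring
    simp only [hu]
    rw [h1, kGamma_add_k hk (by positivity), Nat.factorial_succ]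
    have h2 := (hpos n).ne'
    have h3 : ((n : ℝ) * k + a) ≠ 0 := by positivity
    have h4 : ((n.factorial : ℝ)) ≠ 0 := Nat.cast_ne_zero.2 n.factorial_ne_zero
    have h5 : ((n : ℝ) + 1) ≠ 0 := by positivity
    push_cast
    field_simp
    ring
  apply summable_of_ratio_norm_eventually_le (r := 1 / 2) (by norm_num)
  filter_upwards [Filter.eventually_ge_atTop (⌈2 * |c * q| / k⌉₊ + 1)] with n hn
  have hn' : (2 * |c * q|) / k ≤ (n : ℝ) := by
    calc (2 * |c * q|) / k ≤ (⌈2 * |c * q| / k⌉₊ : ℝ) := Nat.le_ceil _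
    _ ≤ (n : ℝ) := by exact_mod_cast Nat.le_of_succ_le hn
  have hnk : 2 * |c * q| ≤ (n : ℝ) * k := by
    rw [div_le_iff₀ hk] at hn'
    linarith
  have hD : 0 < ((n : ℝ) * k + a) * ((n : ℝ) + 1) := by positivity
  rw [hstep n, norm_mul]
  have habs : ‖(-c) * q / (((n : ℝ) * k + a) * ((n : ℝ) + 1))‖ ≤ 1 / 2 := by
    rw [Real.norm_eq_abs, abs_div, abs_of_pos hD, div_le_iff₀ hD]
    have h6 : |(-c) * q| = |c * q| := by rw [neg_mul, abs_neg]
    rw [h6]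
    have hn0 : (0 : ℝ) ≤ (n : ℝ) := Nat.cast_nonneg n
    nlinarith [abs_nonneg (c * q)]
  calc ‖u n‖ * ‖(-c) * q / (((n : ℝ) * k + a) * ((n : ℝ) + 1))‖
      ≤ ‖u n‖ * (1 / 2) := mul_le_mul_of_nonneg_left habs (norm_nonneg _)
    _ = 1 / 2 * ‖u n‖ := by ring

theorem kBessel_three_term_recurrence (k ν c : ℝ) (hk : 0 < k) (hν : 0 < ν) (x : ℝ)
    (hx : 0 < x) :
    2 * ν * kBesselW k ν c x =
      x * kBesselW k (ν - k) c x + c * k * x * kBesselW k (ν + k) c x := by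
  set y : ℝ := x / 2 with hy_def
  have hy : 0 < y := by positivity
  set s : ℝ := ν / k with hs_def
  set q : ℝ := y ^ 2 with hq_def
  have hrw : ∀ (r : ℕ) (t : ℝ), y ^ (2 * (r : ℝ) + t) = y ^ t * q ^ r := by
    intro r t
    rw [Real.rpow_add hy, mul_comm]
    congr 1
    rw [show (2 : ℝ) * (r : ℝ) = ((2 * r : ℕ) : ℝ) by push_cast; ring,
      Real.rpow_natCast, hq_def, pow_mul]
  set a1 : ℕ → ℝ :=
    fun r => (-c) ^ r / (kGamma k ((r : ℝ) * k + ν + k) * (r.factorial : ℝ)) * q ^ r with ha1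
  set a0 : ℕ → ℝ :=
    fun r => (-c) ^ r / (kGamma k ((r : ℝ) * k + ν) * (r.factorial : ℝ)) * q ^ r with ha0
  set a2 : ℕ → ℝ :=
    fun r => (-c) ^ r / (kGamma k ((r : ℝ) * k + ν + 2 * k) * (r.factorial : ℝ)) * q ^ r with ha2
  have hs1 : Summable a1 :=
    (kBessel_summable_aux k (ν + k) c q hk (by linarith)).congr fun r => by
      rw [show (r : ℝ) * k + (ν + k) = (r : ℝ) * k + ν + k by ring]
  have hs0 : Summable a0 := kBessel_summable_aux k ν c q hk hν
  have hs2 : Summable a2 :=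
    (kBessel_summable_aux k (ν + 2 * k) c q hk (by linarith)).congr fun r => by
      rw [show (r : ℝ) * k + (ν + 2 * k) = (r : ℝ) * k + ν + 2 * k by ring]
  have e1 : kBesselW k ν c x = y ^ s * ∑' r, a1 r := by
    rw [kBesselW, ← tsum_mul_left]
    apply tsum_congr
    intro r
    rw [← hy_def, hrw r s, ha1]
    ring
  have e0 : kBesselW k (ν - k) c x = y ^ (s - 1) * ∑' r, a0 r := by
    rw [kBesselW, ← tsum_mul_left]
    apply tsum_congr
    intro r
    rw [← hy_def,
      show (r : ℝ) * k + (ν - k) + k = (r : ℝ) * k + ν by ring,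
      show (ν - k) / k = s - 1 by rw [hs_def, sub_div, div_self hk.ne'],
      hrw r (s - 1), ha0]
    ring
  have e2 : kBesselW k (ν + k) c x = y ^ (s + 1) * ∑' r, a2 r := by
    rw [kBesselW, ← tsum_mul_left]
    apply tsum_congr
    intro r
    rw [← hy_def,
      show (r : ℝ) * k + (ν + k) + k = (r : ℝ) * k + ν + 2 * k by ring,
      show (ν + k) / k = s + 1 by rw [hs_def, add_div, div_self hk.ne'],
      hrw r (s + 1), ha2]
    ring
  -- the shifted third series
  set H' : ℕ → ℝ := fun r => match r with
    | 0 => 0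
    | n + 1 => 2 * c * k * q * a2 n
    with hH'
  have key : ∀ r : ℕ, 2 * ν * a1 r = 2 * a0 r + H' r := by
    intro r
    match r with
    | 0 =>
      simp only [hH', ha1, ha0]
      rw [show ((0 : ℕ) : ℝ) * k + ν + k = ν + k by push_cast; ring,
        show ((0 : ℕ) : ℝ) * k + ν = ν by push_cast; ring,
        kGamma_add_k hk hν]
      have h3 := (kGamma_pos hk hν).ne'
      field_simp
      ring
    | n + 1 =>
      simp only [hH', ha1, ha0, ha2]
      have hb : (0 : ℝ) < (n : ℝ) * k + ν := by positivity
      have hb' : (0 : ℝ) < (n : ℝ) * k + ν + k := by positivity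
      rw [show (((n : ℕ) + 1 : ℕ) : ℝ) * k + ν + k = ((n : ℝ) * k + ν + k) + k by
          push_cast; ring,
        show (((n : ℕ) + 1 : ℕ) : ℝ) * k + ν = ((n : ℝ) * k + ν) + k by push_cast; ring,
        show (n : ℝ) * k + ν + 2 * k = ((n : ℝ) * k + ν + k) + k by ring,
        kGamma_add_k hk hb', Nat.factorial_succ,
        show (n : ℝ) * k + ν + k = ((n : ℝ) * k + ν) + k by ring,
        kGamma_add_k hk hb]
      have hg := (kGamma_pos hk hb).ne'
      have h4 : ((n.factorial : ℝ)) ≠ 0 := Nat.cast_ne_zero.2 n.factorial_ne_zero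
      push_cast
      field_simp
      ring
  have hH'sum : Summable H' := by
    have h : Summable (fun n : ℕ => H' (n + 1)) := by
      have := hs2.mul_left (2 * c * k * q)
      exact this.congr fun n => rfl
    exact (summable_nat_add_iff 1).mp h
  have htsumH' : ∑' r, H' r = 2 * c * k * q * ∑' r, a2 r := by
    rw [Summable.tsum_eq_zero_add hH'sum]
    simp only [hH']
    rw [zero_add, tsum_mul_left]
  have hkey : 2 * ν * ∑' r, a1 r = 2 * ∑' r, a0 r + 2 * c * k * q * ∑' r, a2 r := by
    rw [← tsum_mul_left, ← tsum_mul_left (a := 2), tsum_congr key,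
      Summable.tsum_add (hs0.mul_left 2) hH'sum, htsumH']
  rw [e1, e0, e2]
  have hx2 : x = 2 * y := by rw [hy_def]; ring
  have hpow1 : y ^ s = y ^ (s - 1) * y := by
    have h := Real.rpow_add_one hy.ne' (s - 1)
    rwa [sub_add_cancel] at h
  have hpow2 : y ^ (s + 1) = y ^ s * y := Real.rpow_add_one hy.ne' s
  rw [hx2, hq_def] at *
  linear_combination (y ^ s) * hkey + (2 * ∑' r, a0 r) * hpow1 -
    (2 * c * k * y * ∑' r, a2 r) * hpow2
end

section
/- Let k > 0, ν > 0, and c ∈ ℝ. Then for all x > 0, W^k_{ν−k,c}(x) = (2/x) Σ_{r=0}^∞ (−ck)^r (ν + 2rk) W^k_{ν+2rk,c}(x), the series on the right-hand side being convergent. -/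
open Real

/-!
Put `a = ν / k`, `z = -c (x/2)² / k` and `Φ_b(z) = ∑ zⁿ / (n! Γ(n + b))`. Then
`W^k_{ν,c}(x) = (x/2)^a k^(-a) Φ_{a+1}(z)`, and the identity becomes
`Φ_a(z) = ∑_r (a + 2r) z^r Φ_{a+2r+1}(z)`. The recurrence `1/Γ(s) = s/Γ(s+1)`, applied termwise,
gives the contiguous relation `Φ_b − z Φ_{b+2} = b Φ_{b+1}`, so the r-th term is
`z^r Φ_{a+2r} − z^(r+1) Φ_{a+2r+2}` and the series telescopes. It converges because
`|Φ_b(z)| ≤ e^|z| / Γ(b)` for `b ≥ 2`, which makes `z^r Φ_{a+2r}(z)` dominated by `e^|z| |z|^r / r!`.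
-/

open Nat Filter

theorem Summable.hasSum_sub_nat_succ {G : Type*} [AddCommGroup G] [TopologicalSpace G]
    [IsTopologicalAddGroup G] {f : ℕ → G} (hf : Summable f) :
    HasSum (fun n ↦ f n - f (n + 1)) (f 0) := by
  simpa using hf.hasSum.sub ((hasSum_nat_add_iff' 1).mpr hf.hasSum)

theorem Real.inv_Gamma_eq_self_mul_inv_Gamma_add_one (s : ℝ) :
    (Gamma s)⁻¹ = s * (Gamma (s + 1))⁻¹ := by
  rcases ne_or_eq s 0 with (h | rfl)
  · rw [Gamma_add_one h, mul_inv, mul_inv_cancel_left₀ h]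
  · rw [zero_add, Gamma_zero, inv_zero, zero_mul]

theorem Real.Gamma_le_Gamma_of_two_le {x y : ℝ} (hx : 2 ≤ x) (hxy : x ≤ y) :
    Gamma x ≤ Gamma y :=
  Gamma_strictMonoOn_Ici.monotoneOn hx (hx.trans hxy) hxy

/-- Mathlib's `Gamma` vanishes at the poles, so `x / 0 = 0` gives each term its true value there
(`1/Γ = 0`): this is the regularized `₀F̃₁(; b; z)` for every real `b`. -/
noncomputable def regHyp0F1 (b z : ℝ) : ℝ := ∑' n : ℕ, z ^ n / (n ! * Gamma (n + b))

theorem abs_regHyp0F1_term_le {b z t : ℝ} {n : ℕ} (ht : 2 ≤ t) (htb : t ≤ n + b) :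
    |z ^ n / (n ! * Gamma (n + b))| ≤ |z| ^ n / n ! / Gamma t := by
  have hΓt : 0 < Gamma t := Gamma_pos_of_pos (by linarith)
  have hΓ : Gamma t ≤ Gamma (n + b) := Gamma_le_Gamma_of_two_le ht htb
  rw [abs_div, abs_mul, abs_pow, abs_of_pos (hΓt.trans_le hΓ), Nat.abs_cast, div_div]
  gcongr

theorem summable_regHyp0F1_term (b z : ℝ) :
    Summable fun n : ℕ ↦ z ^ n / (n ! * Gamma (n + b)) := by
  refine (Real.summable_pow_div_factorial |z|).of_norm_bounded_eventually_nat ?_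
  filter_upwards [eventually_ge_atTop ⌈2 - b⌉₊] with n hn
  have h2 : 2 ≤ (n : ℝ) + b := by linarith [(Nat.ceil_le.mp hn)]
  rw [Real.norm_eq_abs]
  convert abs_regHyp0F1_term_le (z := z) le_rfl h2 using 1
  rw [Gamma_two, div_one]

theorem abs_regHyp0F1_le {b : ℝ} (hb : 2 ≤ b) (z : ℝ) :
    |regHyp0F1 b z| ≤ exp |z| / Gamma b := by
  have hexp : HasSum (fun n : ℕ ↦ |z| ^ n / n ! / Gamma b) (exp |z| / Gamma b) := by
    have := (NormedSpace.expSeries_div_hasSum_exp (𝔸 := ℝ) |z|).div_const (Gamma b)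
    rwa [← exp_eq_exp_ℝ] at this
  have hsum := (summable_regHyp0F1_term b z).norm
  calc |regHyp0F1 b z| ≤ ∑' n : ℕ, |z ^ n / (n ! * Gamma (n + b))| := norm_tsum_le_tsum_norm hsum
    _ ≤ exp |z| / Gamma b :=
      hasSum_le (fun n ↦ abs_regHyp0F1_term_le hb (le_add_of_nonneg_left n.cast_nonneg))
        hsum.hasSum hexp

theorem regHyp0F1_sub_mul_regHyp0F1_add_two (b z : ℝ) :
    regHyp0F1 b z - z * regHyp0F1 (b + 2) z = b * regHyp0F1 (b + 1) z := by
  have hshift : HasSum (fun n : ℕ ↦ n * (z ^ n / (n ! * Gamma (n + (b + 1)))))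
      (z * regHyp0F1 (b + 2) z) := by
    refine (hasSum_nat_add_iff' 1).mp ?_
    simp only [Finset.sum_range_one, Nat.cast_zero, zero_mul, sub_zero]
    refine ((summable_regHyp0F1_term (b + 2) z).hasSum.mul_left z).congr_fun fun n ↦ ?_
    rw [Nat.factorial_succ, pow_succ]
    push_cast
    rw [show (n : ℝ) + 1 + (b + 1) = n + (b + 2) by ring]
    field_simp
  have hterm (n : ℕ) : z ^ n / (n ! * Gamma (n + b)) - n * (z ^ n / (n ! * Gamma (n + (b + 1))))
      = b * (z ^ n / (n ! * Gamma (n + (b + 1)))) := by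
    simp only [div_eq_mul_inv, mul_inv, inv_Gamma_eq_self_mul_inv_Gamma_add_one (n + b)]
    ring_nf
  have h := (summable_regHyp0F1_term b z).hasSum.sub hshift
  simp only [hterm] at h
  exact h.unique ((summable_regHyp0F1_term (b + 1) z).hasSum.mul_left b)

theorem summable_pow_mul_regHyp0F1 (a z : ℝ) :
    Summable fun r : ℕ ↦ z ^ r * regHyp0F1 (a + 2 * r) z := by
  have hdom := (Real.summable_pow_div_factorial |z|).mul_left (exp |z|)
  refine hdom.of_norm_bounded_eventually_nat ?_
  filter_upwards [eventually_ge_atTop ⌈1 - a⌉₊, eventually_ge_atTop 1] with r hra hr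
  have hr2 : (2 : ℝ) ≤ r + 1 := by exact_mod_cast Nat.succ_le_succ hr
  have hΓ : (r ! : ℝ) ≤ Gamma (a + 2 * r) := by
    rw [← Gamma_nat_eq_factorial]
    exact Gamma_le_Gamma_of_two_le hr2 (by linarith [Nat.ceil_le.mp hra])
  rw [Real.norm_eq_abs, abs_mul, abs_pow]
  calc |z| ^ r * |regHyp0F1 (a + 2 * r) z|
      ≤ |z| ^ r * (exp |z| / Gamma (a + 2 * r)) := by
        gcongr
        exact abs_regHyp0F1_le (by linarith [Nat.ceil_le.mp hra]) z
    _ ≤ |z| ^ r * (exp |z| / r !) := by gcongr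
    _ = exp |z| * (|z| ^ r / r !) := by ring

theorem hasSum_mul_pow_mul_regHyp0F1 (a z : ℝ) :
    HasSum (fun r : ℕ ↦ (a + 2 * r) * z ^ r * regHyp0F1 (a + 2 * r + 1) z) (regHyp0F1 a z) := by
  have h := (summable_pow_mul_regHyp0F1 a z).hasSum_sub_nat_succ
  rw [pow_zero, Nat.cast_zero, mul_zero, add_zero, one_mul] at h
  refine h.congr_fun fun r ↦ ?_
  rw [Nat.cast_succ, show a + 2 * (r + 1) = a + 2 * r + 2 by ring, pow_succ, mul_assoc, mul_assoc,
    ← mul_sub, regHyp0F1_sub_mul_regHyp0F1_add_two]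
  ring

theorem kBesselW_eq_regHyp0F1 {k x : ℝ} (hk : 0 < k) (hx : 0 < x) (ν c : ℝ) :
    kBesselW k ν c x =
      (x / 2) ^ (ν / k) / k ^ (ν / k) * regHyp0F1 (ν / k + 1) (-c * (x / 2) ^ 2 / k) := by
  rw [kBesselW, regHyp0F1, ← tsum_mul_left]
  congr 1 with n
  have hx2 : 0 < x / 2 := by positivity
  have harg : (n * k + ν + k) / k = n + (ν / k + 1) := by field_simp; ring
  have hk' : k ^ ((n : ℝ) + (ν / k + 1) - 1) = k ^ n * k ^ (ν / k) := by
    rw [show (n : ℝ) + (ν / k + 1) - 1 = n + ν / k by ring, rpow_add hk, rpow_natCast]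
  have hx' : (x / 2) ^ (2 * (n : ℝ) + ν / k) = ((x / 2) ^ 2) ^ n * (x / 2) ^ (ν / k) := by
    rw [rpow_add hx2, show 2 * (n : ℝ) = (2 * n : ℕ) by push_cast; ring, rpow_natCast, pow_mul]
  rw [kGamma, harg, hk', hx', div_pow (-c * _), mul_pow]
  have hkν : 0 < k ^ (ν / k) := rpow_pos_of_pos hk _
  field_simp

theorem half_mul_kBesselW_sub {k x : ℝ} (hk : 0 < k) (hx : 0 < x) (ν c : ℝ) :
    x / 2 * kBesselW k (ν - k) c x =
      k * (x / 2) ^ (ν / k) / k ^ (ν / k) * regHyp0F1 (ν / k) (-c * (x / 2) ^ 2 / k) := by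
  rw [kBesselW_eq_regHyp0F1 hk hx, sub_div, div_self hk.ne', sub_add_cancel,
    rpow_sub_one (by positivity), rpow_sub_one hk.ne']
  field_simp

theorem kBesselW_add_two_mul {k x : ℝ} (hk : 0 < k) (hx : 0 < x) (ν c : ℝ) (r : ℕ) :
    (-(c * k)) ^ r * (ν + 2 * r * k) * kBesselW k (ν + 2 * r * k) c x =
      k * (x / 2) ^ (ν / k) / k ^ (ν / k) *
        ((ν / k + 2 * r) * (-c * (x / 2) ^ 2 / k) ^ r * regHyp0F1 (ν / k + 2 * r + 1)
          (-c * (x / 2) ^ 2 / k)) := by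
  have hx2 : 0 < x / 2 := by positivity
  have harg : (ν + 2 * r * k) / k = ν / k + 2 * r := by field_simp
  have hck : (-(c * k)) ^ r = (-c) ^ r * k ^ r := by rw [← mul_pow, neg_mul]
  rw [kBesselW_eq_regHyp0F1 hk hx, harg, rpow_add hx2, rpow_add hk, rpow_mul_natCast hx2.le,
    rpow_mul_natCast hk.le, rpow_two, rpow_two, div_pow (-c * _), mul_pow (-c), hck]
  field_simp
  ring

theorem kBessel_series_identity_general (k ν c : ℝ) (hk : 0 < k) (x : ℝ) (hx : 0 < x) :
    HasSum (fun r : ℕ => (-(c * k)) ^ r * (ν + 2 * r * k) * kBesselW k (ν + 2 * r * k) c x)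
      (x / 2 * kBesselW k (ν - k) c x) := by
  rw [half_mul_kBesselW_sub hk hx]
  exact ((hasSum_mul_pow_mul_regHyp0F1 _ _).mul_left _).congr_fun (kBesselW_add_two_mul hk hx ν c)

theorem kBessel_series_identity (k ν c : ℝ) (hk : 0 < k) (hν : 0 < ν) (x : ℝ) (hx : 0 < x) :
    HasSum (fun r : ℕ => (-(c * k)) ^ r * (ν + 2 * r * k) * kBesselW k (ν + 2 * r * k) c x)
      (x / 2 * kBesselW k (ν - k) c x) :=
  kBessel_series_identity_general k ν c hk x hx
end

section
/- Let k > 0 and ν ≥ μ > −k. Then for every fixed x > 0, the inequality 𝓘^k_{ν+k}(x) · 𝓘^k_μ(x) ≥ 𝓘^k_ν(x) · 𝓘^k_{μ+k}(x) holds; equivalently, ν ↦ 𝓘^k_{ν+k}(x) / 𝓘^k_ν(x) is increasing on (−k, ∞). -/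
open Real

/-- The normalized modified k-Bessel function `𝓘^k_ν(x) = Σ f_r(ν) x^(2r)`. -/
noncomputable def kBesselI (k ν x : ℝ) : ℝ :=
  ∑' r : ℕ, kGamma k (ν + k) / (kGamma k (r * k + ν + k) * 4 ^ r * (r.factorial : ℝ)) *
    x ^ (2 * r)

open Finset in
open Finset in
private lemma P_pos {t : ℝ} (ht : -1 < t) (r : ℕ) :
    0 < ∏ j ∈ Finset.range r, (t + 1 + (j : ℝ)) := by
  apply Finset.prod_pos
  intro j _
  have : (0:ℝ) ≤ j := Nat.cast_nonneg j
  linarith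

open Finset in
private lemma Gamma_prod {t : ℝ} (ht : -1 < t) (r : ℕ) :
    Real.Gamma (t + 1 + r) = Real.Gamma (t + 1) * ∏ j ∈ Finset.range r, (t + 1 + (j : ℝ)) := by
  induction r with
  | zero => simp
  | succ n ih =>
    have hpos : (0:ℝ) < t + 1 + n := by
      have : (0:ℝ) ≤ n := Nat.cast_nonneg n
      linarith
    have h1 : t + 1 + ((n:ℝ) + 1) = (t + 1 + n) + 1 := by ring
    push_cast
    rw [h1, Real.Gamma_add_one hpos.ne', ih, Finset.prod_range_succ]
    ring

open Finset in
noncomputable def bb (y t : ℝ) (r : ℕ) : ℝ :=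
  y ^ r / ((r.factorial : ℝ) * ∏ j ∈ Finset.range r, (t + 1 + (j : ℝ)))

open Finset in
private lemma bb_nonneg {y t : ℝ} (hy : 0 ≤ y) (ht : -1 < t) (r : ℕ) : 0 ≤ bb y t r := by
  unfold bb
  have h1 := P_pos ht r
  have h2 : (0:ℝ) < (r.factorial : ℝ) := by positivity
  positivity

open Finset in
private lemma summable_bb {y t : ℝ} (hy : 0 ≤ y) (ht : -1 < t) : Summable (bb y t) := by
  have ht1 : (0:ℝ) < t + 1 := by linarith
  refine Summable.of_nonneg_of_le (fun r => bb_nonneg hy ht r) ?_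
    (Real.summable_pow_div_factorial (y / (t + 1)))
  · intro r
    unfold bb
    rw [div_pow, div_div]
    apply div_le_div_of_nonneg_left (by positivity) (by positivity)
    rw [mul_comm ((t+1)^r)]
    apply mul_le_mul_of_nonneg_left _ (by positivity)
    calc (t + 1) ^ r = ∏ _j ∈ Finset.range r, (t + 1) := by
          rw [Finset.prod_const, Finset.card_range]
      _ ≤ ∏ j ∈ Finset.range r, (t + 1 + (j : ℝ)) := by
          apply Finset.prod_le_prod (fun j _ => le_of_lt ht1)
          intro j _
          have : (0:ℝ) ≤ j := Nat.cast_nonneg j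
          linarith

open Finset in
private lemma kBesselI_eq {k ν : ℝ} (x : ℝ) (hk : 0 < k) (hν : -k < ν) :
    kBesselI k ν x = ∑' r : ℕ, bb (x ^ 2 / (4 * k)) (ν / k) r := by
  unfold kBesselI
  apply tsum_congr
  intro r
  have ht : -1 < ν / k := by
    rw [show (-1 : ℝ) = -k / k by field_simp]
    exact (div_lt_div_iff_of_pos_right hk).2 hν
  set t := ν / k with htdef
  have h1 : (ν + k) / k = t + 1 := by rw [htdef]; field_simp
  have h2 : (r * k + ν + k) / k = t + 1 + r := by rw [htdef]; field_simp; ring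
  have hg1 : kGamma k (ν + k) = k ^ t * Real.Gamma (t + 1) := by
    unfold kGamma
    rw [h1]
    norm_num
  have hg2 : kGamma k (r * k + ν + k)
      = (k ^ t * (k : ℝ) ^ (r : ℕ)) * (Real.Gamma (t + 1) * ∏ j ∈ Finset.range r, (t + 1 + (j : ℝ))) := by
    unfold kGamma
    rw [h2, Gamma_prod ht r, show t + 1 + (r:ℝ) - 1 = t + (r:ℝ) by ring,
      Real.rpow_add hk, Real.rpow_natCast]
  rw [hg1, hg2]
  unfold bb
  have hkt : (0:ℝ) < k ^ t := Real.rpow_pos_of_pos hk t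
  have hG : (0:ℝ) < Real.Gamma (t + 1) := Real.Gamma_pos_of_pos (by linarith)
  have hP := P_pos ht r
  have hf : (0:ℝ) < (r.factorial : ℝ) := by positivity
  rw [pow_mul, div_pow, mul_pow]
  field_simp
open Finset in
private lemma P_shift (t : ℝ) (r : ℕ) :
    (∏ j ∈ Finset.range r, (t + 1 + 1 + (j : ℝ))) * (t + 1) =
      (∏ j ∈ Finset.range r, (t + 1 + (j : ℝ))) * (t + 1 + r) := by
  induction r with
  | zero => simp
  | succ n ih =>
    rw [Finset.prod_range_succ, Finset.prod_range_succ]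
    push_cast
    linear_combination (t + 1 + 1 + (n:ℝ)) * ih

open Finset in
private lemma core' {T S a b pr pm qr qm PR PM QR QM : ℝ}
    (hS : 0 < S) (hTS : S ≤ T) (ha : 0 ≤ a) (hab : a ≤ b)
    (hpr : 0 < pr) (hpm : 0 < pm) (hqr : 0 < qr) (hqm : 0 < qm)
    (hPR : PR * T = pr * (T + a)) (hPM : PM * T = pm * (T + b))
    (hQR : QR * S = qr * (S + a)) (hQM : QM * S = qm * (S + b))
    (hXY : pr * qm ≤ pm * qr) :
    1/(pr * QM) + 1/(pm * QR) ≤ 1/(PR * qm) + 1/(PM * qr) := by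
  have hT : (0:ℝ) < T := lt_of_lt_of_le hS hTS
  have hb : (0:ℝ) ≤ b := le_trans ha hab
  have hTa : (0:ℝ) < T + a := by linarith
  have hTb : (0:ℝ) < T + b := by linarith
  have hSa : (0:ℝ) < S + a := by linarith
  have hSb : (0:ℝ) < S + b := by linarith
  have ePR : PR = pr * (T + a) / T := by field_simp at hPR ⊢; linarith [hPR]
  have ePM : PM = pm * (T + b) / T := by field_simp at hPM ⊢; linarith [hPM]
  have eQR : QR = qr * (S + a) / S := by field_simp at hQR ⊢; linarith [hQR]
  have eQM : QM = qm * (S + b) / S := by field_simp at hQM ⊢; linarith [hQM]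
  have hA' : (0:ℝ) ≤ (T + b) * (S + a) * (b * T - a * S) := by
    have : a * S ≤ b * T := by nlinarith
    have h1 : (0:ℝ) ≤ b * T - a * S := by linarith
    positivity
  have hΔ : (0:ℝ) ≤ (T + b) * (S + a) * (b * T - a * S)
      + (T + a) * (S + b) * (a * T - b * S) := by
    have hfac : (T + b) * (S + a) * (b * T - a * S) + (T + a) * (S + b) * (a * T - b * S)
        = (T - S) * ((a + b) * T * S + 2 * a * b * (T + S) + a * b * (a + b)) := by ring
    rw [hfac]
    have h1 : (0:ℝ) ≤ T - S := by linarith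
    have h2 : (0:ℝ) ≤ (a + b) * T * S + 2 * a * b * (T + S) + a * b * (a + b) := by positivity
    positivity
  have hnum : (0:ℝ) ≤ pm * qr * ((T + b) * (S + a) * (b * T - a * S))
      + pr * qm * ((T + a) * (S + b) * (a * T - b * S)) := by
    have h1 := mul_nonneg (sub_nonneg.2 hXY) hA'
    have h2 := mul_nonneg (le_of_lt (mul_pos hpr hqm)) hΔ
    nlinarith [h1, h2]
  have key : (1/(PR * qm) + 1/(PM * qr)) - (1/(pr * QM) + 1/(pm * QR))
      = (pm * qr * ((T + b) * (S + a) * (b * T - a * S))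
          + pr * qm * ((T + a) * (S + b) * (a * T - b * S)))
        / (pr * pm * qr * qm * (T + a) * (T + b) * (S + a) * (S + b)) := by
    rw [ePR, ePM, eQR, eQM]
    field_simp
    ring
  have hden : (0:ℝ) < pr * pm * qr * qm * (T + a) * (T + b) * (S + a) * (S + b) := by positivity
  have := div_nonneg hnum (le_of_lt hden)
  linarith [key ▸ this]
open Finset in
private lemma P_mono {t s : ℝ} (hs : -1 < s) (hst : s ≤ t) {r m : ℕ} (hrm : r ≤ m) :
    (∏ j ∈ Finset.range r, (t + 1 + (j : ℝ))) * ∏ j ∈ Finset.range m, (s + 1 + (j : ℝ))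
      ≤ (∏ j ∈ Finset.range m, (t + 1 + (j : ℝ))) * ∏ j ∈ Finset.range r, (s + 1 + (j : ℝ)) := by
  have ht : -1 < t := lt_of_lt_of_le hs hst
  obtain ⟨d, rfl⟩ := Nat.exists_eq_add_of_le hrm
  rw [Finset.prod_range_add, Finset.prod_range_add]
  have h : (∏ i ∈ Finset.range d, (s + 1 + ((r + i : ℕ) : ℝ)))
      ≤ ∏ i ∈ Finset.range d, (t + 1 + ((r + i : ℕ) : ℝ)) := by
    apply Finset.prod_le_prod
    · intro i _
      have : (0:ℝ) ≤ ((r + i : ℕ) : ℝ) := Nat.cast_nonneg _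
      linarith
    · intro i _; linarith
  have h1 := P_pos ht r
  have h2 := P_pos hs r
  nlinarith [mul_le_mul_of_nonneg_left h (le_of_lt (mul_pos h1 h2))]

open Finset in
private lemma core_bb {y t s : ℝ} (hy : 0 ≤ y) (hs : -1 < s) (hst : s ≤ t)
    {r m : ℕ} (hrm : r ≤ m) :
    bb y t r * bb y (s + 1) m + bb y t m * bb y (s + 1) r
      ≤ bb y (t + 1) r * bb y s m + bb y (t + 1) m * bb y s r := by
  have ht : -1 < t := lt_of_lt_of_le hs hst
  have ht1 : -1 < t + 1 := by linarith
  have hs1 : -1 < s + 1 := by linarith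
  have hterm : ∀ (u v : ℕ) (A B : ℝ),
      y ^ u / ((u.factorial : ℝ) * A) * (y ^ v / ((v.factorial : ℝ) * B))
        = y ^ u * y ^ v / ((u.factorial : ℝ) * (v.factorial : ℝ)) * (1 / (A * B)) := by
    intro u v A B
    simp [div_eq_mul_inv, mul_inv]
    ring
  have hc : (0:ℝ) ≤ y ^ r * y ^ m / ((r.factorial : ℝ) * (m.factorial : ℝ)) := by positivity
  have hcore := core' (T := t + 1) (S := s + 1) (a := (r:ℝ)) (b := (m:ℝ))
    (pr := ∏ j ∈ Finset.range r, (t + 1 + (j : ℝ)))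
    (pm := ∏ j ∈ Finset.range m, (t + 1 + (j : ℝ)))
    (qr := ∏ j ∈ Finset.range r, (s + 1 + (j : ℝ)))
    (qm := ∏ j ∈ Finset.range m, (s + 1 + (j : ℝ)))
    (PR := ∏ j ∈ Finset.range r, (t + 1 + 1 + (j : ℝ)))
    (PM := ∏ j ∈ Finset.range m, (t + 1 + 1 + (j : ℝ)))
    (QR := ∏ j ∈ Finset.range r, (s + 1 + 1 + (j : ℝ)))
    (QM := ∏ j ∈ Finset.range m, (s + 1 + 1 + (j : ℝ)))
    (by linarith) (by linarith) (Nat.cast_nonneg r) (Nat.cast_le.2 hrm)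
    (P_pos ht r) (P_pos ht m) (P_pos hs r) (P_pos hs m)
    (P_shift t r) (P_shift t m) (P_shift s r) (P_shift s m)
    (P_mono hs hst hrm)
  unfold bb
  rw [hterm, hterm, hterm, hterm]
  rw [mul_comm (m.factorial : ℝ) (r.factorial : ℝ), mul_comm (y ^ m) (y ^ r)]
  calc y ^ r * y ^ m / (↑r.factorial * ↑m.factorial) * (1 / ((∏ j ∈ Finset.range r, (t + 1 + (j:ℝ))) * ∏ j ∈ Finset.range m, (s + 1 + 1 + (j:ℝ))))
        + y ^ r * y ^ m / (↑r.factorial * ↑m.factorial) * (1 / ((∏ j ∈ Finset.range m, (t + 1 + (j:ℝ))) * ∏ j ∈ Finset.range r, (s + 1 + 1 + (j:ℝ))))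
      = y ^ r * y ^ m / (↑r.factorial * ↑m.factorial)
        * (1 / ((∏ j ∈ Finset.range r, (t + 1 + (j:ℝ))) * ∏ j ∈ Finset.range m, (s + 1 + 1 + (j:ℝ)))
          + 1 / ((∏ j ∈ Finset.range m, (t + 1 + (j:ℝ))) * ∏ j ∈ Finset.range r, (s + 1 + 1 + (j:ℝ)))) := by ring
    _ ≤ y ^ r * y ^ m / (↑r.factorial * ↑m.factorial)
        * (1 / ((∏ j ∈ Finset.range r, (t + 1 + 1 + (j:ℝ))) * ∏ j ∈ Finset.range m, (s + 1 + (j:ℝ)))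
          + 1 / ((∏ j ∈ Finset.range m, (t + 1 + 1 + (j:ℝ))) * ∏ j ∈ Finset.range r, (s + 1 + (j:ℝ)))) :=
        mul_le_mul_of_nonneg_left hcore hc
    _ = _ := by ring
set_option maxHeartbeats 1000000 in
theorem kBesselI_ratio_order_monotone (k μ ν : ℝ) (hk : 0 < k) (hμ : -k < μ) (hμν : μ ≤ ν)
    (x : ℝ) (hx : 0 < x) :
    kBesselI k ν x * kBesselI k (μ + k) x ≤ kBesselI k (ν + k) x * kBesselI k μ x := by
  set y := x ^ 2 / (4 * k) with hydef
  have hy : 0 ≤ y := by positivity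
  set s := μ / k with hsdef
  set t := ν / k with htdef
  have hs : -1 < s := by
    rw [hsdef, show (-1 : ℝ) = -k / k by field_simp]
    exact (div_lt_div_iff_of_pos_right hk).2 hμ
  have hst : s ≤ t := by
    rw [hsdef, htdef]
    gcongr
  have ht : -1 < t := lt_of_lt_of_le hs hst
  have ht1 : -1 < t + 1 := by linarith
  have hs1 : -1 < s + 1 := by linarith
  -- rewrite the four Bessel functions
  have hνk : -k < ν := lt_of_lt_of_le hμ hμν
  have e1 : kBesselI k ν x = ∑' r : ℕ, bb y t r := kBesselI_eq x hk hνk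
  have e2 : kBesselI k μ x = ∑' r : ℕ, bb y s r := kBesselI_eq x hk hμ
  have hshift : ∀ w : ℝ, (w + k) / k = w / k + 1 := by intro w; field_simp
  have e3 : kBesselI k (ν + k) x = ∑' r : ℕ, bb y (t + 1) r := by
    rw [kBesselI_eq x hk (by linarith : -k < ν + k), hshift ν]
  have e4 : kBesselI k (μ + k) x = ∑' r : ℕ, bb y (s + 1) r := by
    rw [kBesselI_eq x hk (by linarith : -k < μ + k), hshift μ]
  rw [e1, e2, e3, e4]
  -- summability
  have S1 : Summable (bb y t) := summable_bb hy ht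
  have S2 : Summable (bb y s) := summable_bb hy hs
  have S3 : Summable (bb y (t + 1)) := summable_bb hy ht1
  have S4 : Summable (bb y (s + 1)) := summable_bb hy hs1
  have norm_of : ∀ {w : ℝ} (hw : -1 < w), (fun r : ℕ => ‖bb y w r‖) = bb y w := by
    intro w hw
    funext r
    exact Real.norm_of_nonneg (bb_nonneg hy hw r)
  rw [tsum_mul_tsum_of_summable_norm (by rw [norm_of ht]; exact S1) (by rw [norm_of hs1]; exact S4),
    tsum_mul_tsum_of_summable_norm (by rw [norm_of ht1]; exact S3) (by rw [norm_of hs]; exact S2)]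
  -- products over ℕ × ℕ
  set H : ℕ × ℕ → ℝ := fun p => bb y t p.1 * bb y (s + 1) p.2 with hHdef
  set G : ℕ × ℕ → ℝ := fun p => bb y (t + 1) p.1 * bb y s p.2 with hGdef
  have hH : Summable H := S1.mul_of_nonneg S4 (fun r => bb_nonneg hy ht r)
    (fun r => bb_nonneg hy hs1 r)
  have hG : Summable G := S3.mul_of_nonneg S2 (fun r => bb_nonneg hy ht1 r)
    (fun r => bb_nonneg hy hs r)
  have hHswap : Summable (fun p : ℕ × ℕ => H p.swap) :=
    ((Equiv.prodComm ℕ ℕ).summable_iff.2 hH)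
  have hGswap : Summable (fun p : ℕ × ℕ => G p.swap) :=
    ((Equiv.prodComm ℕ ℕ).summable_iff.2 hG)
  have hkey : ∀ p : ℕ × ℕ, H p + H p.swap ≤ G p + G p.swap := by
    rintro ⟨r, m⟩
    simp only [hHdef, hGdef, Prod.swap_prod_mk]
    rcases le_total r m with hrm | hmr
    · have := core_bb hy hs hst hrm
      linarith
    · have := core_bb hy hs hst hmr
      linarith
  have hsum : ∑' p, H p + ∑' p, (fun q : ℕ × ℕ => H q.swap) p
      ≤ ∑' p, G p + ∑' p, (fun q : ℕ × ℕ => G q.swap) p := by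
    rw [← Summable.tsum_add hH hHswap, ← Summable.tsum_add hG hGswap]
    exact Summable.tsum_le_tsum (fun p => hkey p) (hH.add hHswap) (hG.add hGswap)
  have hHs : ∑' p, (fun q : ℕ × ℕ => H q.swap) p = ∑' p, H p :=
    (Equiv.prodComm ℕ ℕ).tsum_eq H
  have hGs : ∑' p, (fun q : ℕ × ℕ => G q.swap) p = ∑' p, G p :=
    (Equiv.prodComm ℕ ℕ).tsum_eq G
  rw [hHs, hGs] at hsum
  linarith
end

section
/- Let k > 0 and x > 0 be fixed. Then the function ν ↦ 𝓘^k_ν(x) is decreasing on (−k, ∞); that is, for ν ≥ μ > −k one has 𝓘^k_ν(x) ≤ 𝓘^k_μ(x). -/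
open Real

set_option maxHeartbeats 1000000

lemma gamma_add_nat_aux (a : ℝ) (ha : 0 < a) (r : ℕ) :
    Real.Gamma (a + r) = Real.Gamma a * ∏ i ∈ Finset.range r, (a + i) := by
  induction r with
  | zero => simp
  | succ n ih =>
    have h : a + ((n : ℕ) + 1 : ℕ) = (a + n) + 1 := by push_cast; ring
    rw [h, Real.Gamma_add_one (by positivity), ih, Finset.prod_range_succ]
    ring

lemma kGamma_pos_s16 (k ν : ℝ) (hk : 0 < k) (hν : -k < ν) : 0 < kGamma k (ν + k) := by
  have ha : 0 < (ν + k) / k := div_pos (by linarith) hk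
  exact mul_pos (Real.rpow_pos_of_pos hk _) (Real.Gamma_pos_of_pos ha)

lemma kGamma_ratio (k ν : ℝ) (hk : 0 < k) (hν : -k < ν) (r : ℕ) :
    kGamma k (ν + k) / kGamma k (r * k + ν + k)
      = 1 / (k ^ r * ∏ i ∈ Finset.range r, ((ν + k) / k + i)) := by
  have hνk : 0 < ν + k := by linarith
  have ha : 0 < (ν + k) / k := div_pos hνk hk
  have h1 : (↑r * k + ν + k) / k = (ν + k) / k + r := by field_simp; ring
  unfold kGamma
  rw [h1, gamma_add_nat_aux _ ha r]
  have h2 : (k : ℝ) ^ ((ν + k) / k + (r : ℝ) - 1)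
      = k ^ ((ν + k) / k - 1) * (k : ℝ) ^ r := by
    rw [← Real.rpow_natCast k r, ← Real.rpow_add hk]
    ring_nf
  rw [h2]
  have hΓ : Real.Gamma ((ν + k) / k) ≠ 0 := (Real.Gamma_pos_of_pos ha).ne'
  have hkp : (0 : ℝ) < k ^ ((ν + k) / k - 1) := Real.rpow_pos_of_pos hk _
  field_simp

lemma prod_pos_aux (k ν : ℝ) (hk : 0 < k) (hν : -k < ν) (r : ℕ) :
    0 < ∏ i ∈ Finset.range r, ((ν + k) / k + (i : ℝ)) := by
  have ha : 0 < (ν + k) / k := div_pos (by linarith) hk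
  exact Finset.prod_pos fun i _ => by positivity

lemma summable_aux (k ν x : ℝ) (hk : 0 < k) (hν : -k < ν) (hx : 0 < x) :
    Summable (fun r : ℕ =>
      x ^ (2 * r) / (k ^ r * (∏ i ∈ Finset.range r, ((ν + k) / k + i)) * 4 ^ r *
        (r.factorial : ℝ))) := by
  have ha : 0 < (ν + k) / k := div_pos (by linarith) hk
  set a := (ν + k) / k with ha_def
  set c := min a 1 with hc_def
  have hc : 0 < c := lt_min ha one_pos
  have hc1 : c ≤ 1 := min_le_right _ _
  have hca : c ≤ a := min_le_left _ _
  refine Summable.of_nonneg_of_le (fun r => by positivity) (fun r => ?_)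
    (Real.summable_pow_div_factorial (x ^ 2 / (4 * k * c)))
  have hP : 0 < ∏ i ∈ Finset.range r, (a + i) := prod_pos_aux k ν hk hν r
  have hfac : (1 : ℝ) ≤ (r.factorial : ℝ) := by
    exact_mod_cast Nat.one_le_iff_ne_zero.mpr r.factorial_ne_zero
  have hfac0 : (0 : ℝ) < (r.factorial : ℝ) := by linarith
  have hprod : c ^ r * (r.factorial : ℝ) ≤ ∏ i ∈ Finset.range r, (a + i) := by
    have heq : c ^ r * (r.factorial : ℝ) = ∏ i ∈ Finset.range r, (c * (i + 1)) := by
      rw [Finset.prod_mul_distrib, Finset.prod_const, Finset.card_range]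
      congr 1
      rw [← Finset.prod_range_add_one_eq_factorial r]
      push_cast
      rfl
    rw [heq]
    apply Finset.prod_le_prod
    · intro i _; positivity
    · intro i _
      have h1 : c * (i : ℝ) ≤ i := by nlinarith [Nat.cast_nonneg (α := ℝ) i]
      nlinarith
  calc x ^ (2 * r) / (k ^ r * (∏ i ∈ Finset.range r, (a + i)) * 4 ^ r * (r.factorial : ℝ))
      ≤ x ^ (2 * r) / (k ^ r * (c ^ r * (r.factorial : ℝ)) * 4 ^ r * (r.factorial : ℝ)) := by
        gcongr
    _ ≤ (x ^ 2 / (4 * k * c)) ^ r / (r.factorial : ℝ) := by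
        have hrhs : (x ^ 2 / (4 * k * c)) ^ r / (r.factorial : ℝ)
            = (x ^ 2) ^ r / ((4 * k * c) ^ r * (r.factorial : ℝ)) := by
          rw [div_pow, div_div]
        rw [hrhs, pow_mul]
        have hden : k ^ r * (c ^ r * (r.factorial : ℝ)) * 4 ^ r * (r.factorial : ℝ)
            = (4 * k * c) ^ r * (r.factorial : ℝ) * (r.factorial : ℝ) := by
          rw [mul_pow, mul_pow]; ring
        rw [hden]
        gcongr
        nlinarith [mul_pos (pow_pos (show (0:ℝ) < 4 * k * c by positivity) r) hfac0]

lemma kBesselI_term_eq (k ν x : ℝ) (hk : 0 < k) (hν : -k < ν) (r : ℕ) :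
    kGamma k (ν + k) / (kGamma k (r * k + ν + k) * 4 ^ r * (r.factorial : ℝ)) * x ^ (2 * r)
      = x ^ (2 * r) / (k ^ r * (∏ i ∈ Finset.range r, ((ν + k) / k + i)) * 4 ^ r *
          (r.factorial : ℝ)) := by
  have h := kGamma_ratio k ν hk hν r
  have hP : 0 < ∏ i ∈ Finset.range r, ((ν + k) / k + (i : ℝ)) := prod_pos_aux k ν hk hν r
  have hfac : (0:ℝ) < (r.factorial : ℝ) := by exact_mod_cast r.factorial_pos
  have hG1 : 0 < kGamma k (ν + k) := kGamma_pos_s16 k ν hk hν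
  have hG2 : 0 < kGamma k (↑r * k + ν + k) := by
    have hνk : 0 < ν + k := by linarith
    have ha : 0 < (↑r * k + ν + k) / k := by
      apply div_pos _ hk
      have : (0:ℝ) ≤ (r:ℝ) * k := by positivity
      linarith
    exact mul_pos (Real.rpow_pos_of_pos hk _) (Real.Gamma_pos_of_pos ha)
  have hkr : (0:ℝ) < (k:ℝ) ^ r := by positivity
  have hG2eq : kGamma k (↑r * k + ν + k)
      = kGamma k (ν + k) * (k ^ r * ∏ i ∈ Finset.range r, ((ν + k) / k + (i : ℝ))) := by
    rw [div_eq_div_iff hG2.ne' (by positivity)] at h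
    linarith [h]
  rw [hG2eq]
  have hD : (0:ℝ) < k ^ r * (∏ i ∈ Finset.range r, ((ν + k) / k + (i:ℝ))) * 4 ^ r *
      (r.factorial : ℝ) :=
    mul_pos (mul_pos (mul_pos hkr hP) (by positivity)) hfac
  have hkey : kGamma k (ν + k) /
      (kGamma k (ν + k) * (k ^ r * ∏ i ∈ Finset.range r, ((ν + k) / k + (i:ℝ))) * 4 ^ r *
        (r.factorial : ℝ))
      = 1 / (k ^ r * (∏ i ∈ Finset.range r, ((ν + k) / k + (i:ℝ))) * 4 ^ r *
        (r.factorial : ℝ)) := by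
    rw [div_eq_div_iff (by nlinarith [mul_pos (mul_pos (mul_pos hG1 (mul_pos hkr hP))
      (show (0:ℝ) < 4 ^ r by positivity)) hfac]) hD.ne']
    ring
  rw [hkey]
  ring

theorem kBesselI_antitone_in_order (k μ ν : ℝ) (hk : 0 < k) (hμ : -k < μ) (hμν : μ ≤ ν)
    (x : ℝ) (hx : 0 < x) :
    kBesselI k ν x ≤ kBesselI k μ x := by
  have hν : -k < ν := lt_of_lt_of_le hμ hμν
  unfold kBesselI
  rw [tsum_congr (kBesselI_term_eq k ν x hk hν), tsum_congr (kBesselI_term_eq k μ x hk hμ)]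
  apply Summable.tsum_le_tsum _ (summable_aux k ν x hk hν hx) (summable_aux k μ x hk hμ hx)
  intro r
  have hPμ : 0 < ∏ i ∈ Finset.range r, ((μ + k) / k + (i : ℝ)) := prod_pos_aux k μ hk hμ r
  have hfac : (0:ℝ) < (r.factorial : ℝ) := by exact_mod_cast r.factorial_pos
  have hle : ∏ i ∈ Finset.range r, ((μ + k) / k + (i : ℝ))
      ≤ ∏ i ∈ Finset.range r, ((ν + k) / k + (i : ℝ)) := by
    apply Finset.prod_le_prod
    · intro i _
      have : 0 < (μ + k) / k := div_pos (by linarith) hk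
      positivity
    · intro i _
      have : (μ + k) / k ≤ (ν + k) / k := by
        exact (div_le_div_iff_of_pos_right hk).mpr (by linarith)
      linarith
  gcongr
end

section
/- Let k > 0, ν ≥ k/2, and x > 0. Then the Chebyshev-type integral inequality (∫_0^1 cosh(x t/√k)(1−t²)^{ν/k − 1/2} dt) · (∫_0^1 cosh(x t/√k)(1−t²)^{ν/k + 1/2} dt) ≤ ((√k/x) · sinh(x/√k)) · ∫_0^1 cosh(x t/√k)(1−t²)^{2ν/k} dt holds. Moreover, if instead −k/2 < ν < k/2, the inequality is reversed. -/
/-!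
Chebyshev's integral inequality with the weight `w(t) = cosh (x t / √k)` on `(0, 1)`: the identity
`∫∫ w(s) w(t) (f s - f t) (g s - g t) = 2 ((∫ w) (∫ w f g) - (∫ w f) (∫ w g))` shows that the
covariance has the sign of `(f s - f t) (g s - g t)`. For `f = (1 - t²)^(ν/k - 1/2)` and
`g = (1 - t²)^(ν/k + 1/2)` both exponents are `≥ 0` when `ν ≥ k/2`, so `f, g` are similarly ordered,
while for `|ν| < k/2` the exponents have opposite signs. Finally `∫₀¹ w = (√k / x) sinh (x / √k)`.
-/

open Real MeasureTheory Set

theorem integral_cosh (a b : ℝ) : ∫ t in a..b, cosh t = sinh b - sinh a :=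
  intervalIntegral.integral_eq_sub_of_hasDerivAt (fun t _ => hasDerivAt_sinh t)
    (continuous_cosh.intervalIntegrable a b)

theorem integral_cosh_mul_div_zero_one {x c : ℝ} (hx : x ≠ 0) (hc : c ≠ 0) :
    ∫ t in (0:ℝ)..1, cosh (x * t / c) = c / x * sinh (x / c) := by
  simp_rw [mul_div_right_comm x _ c]
  rw [intervalIntegral.integral_comp_mul_left (fun t => cosh t) (div_ne_zero hx hc),
    integral_cosh]
  simp [inv_div]

theorem ae_restrict_prod_restrict_of_forall_mem {α : Type*} [MeasurableSpace α] {μ : Measure α}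
    [SFinite μ] {s : Set α} (hs : MeasurableSet s) {p : α → α → Prop}
    (h : ∀ x ∈ s, ∀ y ∈ s, p x y) : ∀ᵐ z ∂(μ.restrict s).prod (μ.restrict s), p z.1 z.2 := by
  rw [Measure.prod_restrict]
  exact ae_restrict_of_forall_mem (hs.prod hs) fun z hz => h _ hz.1 _ hz.2

section Chebyshev

variable {α : Type*} [MeasurableSpace α] {μ : Measure α} [SFinite μ] {w f g : α → ℝ}

theorem integral_prod_chebyshev_eq (hw : Integrable w μ) (hwf : Integrable (fun t => w t * f t) μ)
    (hwg : Integrable (fun t => w t * g t) μ)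
    (hwfg : Integrable (fun t => w t * (f t * g t)) μ) :
    ∫ z, w z.1 * w z.2 * ((f z.1 - f z.2) * (g z.1 - g z.2)) ∂μ.prod μ
      = 2 * ((∫ t, w t ∂μ) * (∫ t, w t * (f t * g t) ∂μ)
          - (∫ t, w t * f t ∂μ) * (∫ t, w t * g t ∂μ)) := by
  have expand : (fun z : α × α => w z.1 * w z.2 * ((f z.1 - f z.2) * (g z.1 - g z.2)))
      = fun z => (w z.1 * (f z.1 * g z.1)) * w z.2 - (w z.1 * f z.1) * (w z.2 * g z.2)
          - (w z.1 * g z.1) * (w z.2 * f z.2) + w z.1 * (w z.2 * (f z.2 * g z.2)) := by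
    funext z; ring
  have h₁ : Integrable (fun z : α × α => w z.1 * (f z.1 * g z.1) * w z.2) (μ.prod μ) :=
    hwfg.mul_prod hw
  have h₂ : Integrable (fun z : α × α => w z.1 * f z.1 * (w z.2 * g z.2)) (μ.prod μ) :=
    hwf.mul_prod hwg
  have h₃ : Integrable (fun z : α × α => w z.1 * g z.1 * (w z.2 * f z.2)) (μ.prod μ) :=
    hwg.mul_prod hwf
  have h₁₂ : Integrable (fun z : α × α => w z.1 * (f z.1 * g z.1) * w z.2
      - w z.1 * f z.1 * (w z.2 * g z.2)) (μ.prod μ) := h₁.sub h₂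
  have h₁₂₃ : Integrable (fun z : α × α => w z.1 * (f z.1 * g z.1) * w z.2
      - w z.1 * f z.1 * (w z.2 * g z.2) - w z.1 * g z.1 * (w z.2 * f z.2)) (μ.prod μ) :=
    h₁₂.sub h₃
  rw [expand, integral_add h₁₂₃ (hw.mul_prod hwfg), integral_sub h₁₂ h₃, integral_sub h₁ h₂,
    integral_prod_mul (fun t => w t * (f t * g t)) w,
    integral_prod_mul (fun t => w t * f t) (fun t => w t * g t),
    integral_prod_mul (fun t => w t * g t) (fun t => w t * f t),
    integral_prod_mul w (fun t => w t * (f t * g t))]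
  ring

theorem integral_mul_integral_le_of_ae_similarly_ordered (hw : Integrable w μ)
    (hwf : Integrable (fun t => w t * f t) μ) (hwg : Integrable (fun t => w t * g t) μ)
    (hwfg : Integrable (fun t => w t * (f t * g t)) μ) (hw0 : 0 ≤ᵐ[μ] w)
    (hfg : ∀ᵐ z ∂μ.prod μ, 0 ≤ (f z.1 - f z.2) * (g z.1 - g z.2)) :
    (∫ t, w t * f t ∂μ) * (∫ t, w t * g t ∂μ) ≤ (∫ t, w t ∂μ) * ∫ t, w t * (f t * g t) ∂μ := by
  have h := integral_nonneg_of_ae (μ := μ.prod μ) <| by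
    filter_upwards [Measure.quasiMeasurePreserving_fst.ae hw0,
      Measure.quasiMeasurePreserving_snd.ae hw0, hfg] with z h1 h2 h3
    exact mul_nonneg (mul_nonneg h1 h2) h3
  rw [integral_prod_chebyshev_eq hw hwf hwg hwfg] at h
  linarith

theorem integral_mul_le_integral_mul_integral_of_ae_oppositely_ordered (hw : Integrable w μ)
    (hwf : Integrable (fun t => w t * f t) μ) (hwg : Integrable (fun t => w t * g t) μ)
    (hwfg : Integrable (fun t => w t * (f t * g t)) μ) (hw0 : 0 ≤ᵐ[μ] w)
    (hfg : ∀ᵐ z ∂μ.prod μ, (f z.1 - f z.2) * (g z.1 - g z.2) ≤ 0) :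
    (∫ t, w t ∂μ) * ∫ t, w t * (f t * g t) ∂μ ≤ (∫ t, w t * f t ∂μ) * (∫ t, w t * g t ∂μ) := by
  have h := integral_nonpos_of_ae (μ := μ.prod μ) <| by
    filter_upwards [Measure.quasiMeasurePreserving_fst.ae hw0,
      Measure.quasiMeasurePreserving_snd.ae hw0, hfg] with z h1 h2 h3
    exact mul_nonpos_of_nonneg_of_nonpos (mul_nonneg h1 h2) h3
  rw [integral_prod_chebyshev_eq hw hwf hwg hwfg] at h
  linarith

end Chebyshev

theorem rpow_sub_rpow_mul_rpow_sub_rpow_nonneg {u v a b : ℝ} (hu : 0 < u) (hv : 0 < v)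
    (ha : 0 ≤ a) (hb : 0 ≤ b) : 0 ≤ (u ^ a - v ^ a) * (u ^ b - v ^ b) := by
  rcases le_total u v with h | h
  · exact mul_nonneg_of_nonpos_of_nonpos (sub_nonpos.2 (rpow_le_rpow hu.le h ha))
      (sub_nonpos.2 (rpow_le_rpow hu.le h hb))
  · exact mul_nonneg (sub_nonneg.2 (rpow_le_rpow hv.le h ha))
      (sub_nonneg.2 (rpow_le_rpow hv.le h hb))

theorem rpow_sub_rpow_mul_rpow_sub_rpow_nonpos {u v a b : ℝ} (hu : 0 < u) (hv : 0 < v)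
    (ha : a ≤ 0) (hb : 0 ≤ b) : (u ^ a - v ^ a) * (u ^ b - v ^ b) ≤ 0 := by
  rcases le_total u v with h | h
  · exact mul_nonpos_of_nonneg_of_nonpos (sub_nonneg.2 (rpow_le_rpow_of_nonpos hu h ha))
      (sub_nonpos.2 (rpow_le_rpow hu.le h hb))
  · exact mul_nonpos_of_nonpos_of_nonneg (sub_nonpos.2 (rpow_le_rpow_of_nonpos hv h ha))
      (sub_nonneg.2 (rpow_le_rpow hv.le h hb))

theorem one_sub_sq_pos_of_mem_Ioo {t : ℝ} (ht : t ∈ Ioo (0 : ℝ) 1) : 0 < 1 - t ^ 2 := by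
  nlinarith [ht.1, ht.2]

section PowerWeights

variable {w : ℝ → ℝ} {a b : ℝ}

theorem integrableOn_mul_one_sub_sq_rpow (hw : ContinuousOn w (Icc 0 1)) (hb : -1 < b) :
    IntegrableOn (fun t => w t * (1 - t ^ 2) ^ b) (Ioo 0 1) := by
  have h_one_sub : IntervalIntegrable (fun t : ℝ => (1 - t) ^ b) volume 0 1 := by
    simpa using
      ((intervalIntegral.intervalIntegrable_rpow' (a := 0) (b := 1) hb).comp_sub_left 1).symm
  have h_one_add : ContinuousOn (fun t : ℝ => (1 + t) ^ b) (uIcc 0 1) :=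
    (by fun_prop : Continuous fun t : ℝ => 1 + t).continuousOn.rpow_const fun t ht =>
      Or.inl (by rw [uIcc_of_le zero_le_one] at ht; linarith [ht.1])
  have h_factored : IntervalIntegrable (fun t => w t * ((1 - t) ^ b * (1 + t) ^ b)) volume 0 1 :=
    (h_one_sub.mul_continuousOn h_one_add).continuousOn_mul (uIcc_of_le (zero_le_one' ℝ) ▸ hw)
  refine (((intervalIntegrable_iff_integrableOn_Ioc_of_le zero_le_one).1 h_factored).mono_set
    Ioo_subset_Ioc_self).congr_fun (fun t ht => ?_) measurableSet_Ioo
  beta_reduce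
  rw [← mul_rpow (by linarith [ht.2]) (by linarith [ht.1])]
  ring_nf

theorem eqOn_mul_one_sub_sq_rpow_add :
    EqOn (fun t => w t * (1 - t ^ 2) ^ (a + b))
      (fun t => w t * ((1 - t ^ 2) ^ a * (1 - t ^ 2) ^ b)) (Ioo 0 1) := fun t ht => by
  simp only [rpow_add (one_sub_sq_pos_of_mem_Ioo ht)]

theorem integral_mul_one_sub_sq_rpow_mul_le (hw : ContinuousOn w (Icc 0 1))
    (hw0 : ∀ t ∈ Ioo (0 : ℝ) 1, 0 ≤ w t) (ha : 0 ≤ a) (hb : 0 ≤ b) :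
    (∫ t in (0 : ℝ)..1, w t * (1 - t ^ 2) ^ a) * (∫ t in (0 : ℝ)..1, w t * (1 - t ^ 2) ^ b) ≤
      (∫ t in (0 : ℝ)..1, w t) * ∫ t in (0 : ℝ)..1, w t * (1 - t ^ 2) ^ (a + b) := by
  simp only [intervalIntegral.integral_of_le zero_le_one, integral_Ioc_eq_integral_Ioo,
    setIntegral_congr_fun measurableSet_Ioo eqOn_mul_one_sub_sq_rpow_add]
  exact integral_mul_integral_le_of_ae_similarly_ordered
    (hw.integrableOn_Icc.mono_set Ioo_subset_Icc_self)
    (integrableOn_mul_one_sub_sq_rpow hw (by linarith))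
    (integrableOn_mul_one_sub_sq_rpow hw (by linarith))
    ((integrableOn_mul_one_sub_sq_rpow hw (by linarith)).congr_fun
      eqOn_mul_one_sub_sq_rpow_add measurableSet_Ioo)
    (ae_restrict_of_forall_mem measurableSet_Ioo hw0)
    (ae_restrict_prod_restrict_of_forall_mem measurableSet_Ioo fun s hs t ht =>
      rpow_sub_rpow_mul_rpow_sub_rpow_nonneg (one_sub_sq_pos_of_mem_Ioo hs)
        (one_sub_sq_pos_of_mem_Ioo ht) ha hb)

theorem integral_mul_integral_mul_one_sub_sq_rpow_le (hw : ContinuousOn w (Icc 0 1))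
    (hw0 : ∀ t ∈ Ioo (0 : ℝ) 1, 0 ≤ w t) (ha₁ : -1 < a) (ha : a ≤ 0) (hb : 0 ≤ b) :
    (∫ t in (0 : ℝ)..1, w t) * (∫ t in (0 : ℝ)..1, w t * (1 - t ^ 2) ^ (a + b)) ≤
      (∫ t in (0 : ℝ)..1, w t * (1 - t ^ 2) ^ a) * ∫ t in (0 : ℝ)..1, w t * (1 - t ^ 2) ^ b := by
  simp only [intervalIntegral.integral_of_le zero_le_one, integral_Ioc_eq_integral_Ioo,
    setIntegral_congr_fun measurableSet_Ioo eqOn_mul_one_sub_sq_rpow_add]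
  exact integral_mul_le_integral_mul_integral_of_ae_oppositely_ordered
    (hw.integrableOn_Icc.mono_set Ioo_subset_Icc_self)
    (integrableOn_mul_one_sub_sq_rpow hw ha₁)
    (integrableOn_mul_one_sub_sq_rpow hw (by linarith))
    ((integrableOn_mul_one_sub_sq_rpow hw (by linarith)).congr_fun
      eqOn_mul_one_sub_sq_rpow_add measurableSet_Ioo)
    (ae_restrict_of_forall_mem measurableSet_Ioo hw0)
    (ae_restrict_prod_restrict_of_forall_mem measurableSet_Ioo fun s hs t ht =>
      rpow_sub_rpow_mul_rpow_sub_rpow_nonpos (one_sub_sq_pos_of_mem_Ioo hs)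
        (one_sub_sq_pos_of_mem_Ioo ht) ha hb)

end PowerWeights

theorem chebyshev_type_integral_inequality (k ν x : ℝ) (hk : 0 < k) (hx : 0 < x) :
    (k / 2 ≤ ν →
      (∫ t in (0:ℝ)..1, Real.cosh (x * t / Real.sqrt k) * (1 - t ^ 2) ^ (ν / k - 1 / 2)) *
          (∫ t in (0:ℝ)..1, Real.cosh (x * t / Real.sqrt k) * (1 - t ^ 2) ^ (ν / k + 1 / 2)) ≤
        (Real.sqrt k / x * Real.sinh (x / Real.sqrt k)) *
          ∫ t in (0:ℝ)..1, Real.cosh (x * t / Real.sqrt k) * (1 - t ^ 2) ^ (2 * ν / k)) ∧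
    (-(k / 2) < ν → ν < k / 2 →
      (Real.sqrt k / x * Real.sinh (x / Real.sqrt k)) *
          (∫ t in (0:ℝ)..1, Real.cosh (x * t / Real.sqrt k) * (1 - t ^ 2) ^ (2 * ν / k)) ≤
        (∫ t in (0:ℝ)..1, Real.cosh (x * t / Real.sqrt k) * (1 - t ^ 2) ^ (ν / k - 1 / 2)) *
          ∫ t in (0:ℝ)..1, Real.cosh (x * t / Real.sqrt k) * (1 - t ^ 2) ^ (ν / k + 1 / 2)) := by
  have hw : ContinuousOn (fun t => cosh (x * t / √k)) (Icc 0 1) := by fun_prop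
  have hw0 : ∀ t ∈ Ioo (0 : ℝ) 1, 0 ≤ cosh (x * t / √k) := fun t _ => (cosh_pos _).le
  have hsum : ν / k - 1 / 2 + (ν / k + 1 / 2) = 2 * ν / k := by ring
  rw [← integral_cosh_mul_div_zero_one hx.ne' (sqrt_pos.2 hk).ne', ← hsum]
  refine ⟨fun hν => ?_, fun hν₁ hν₂ => ?_⟩
  · have : 1 / 2 ≤ ν / k := (le_div_iff₀ hk).2 (by linarith)
    exact integral_mul_one_sub_sq_rpow_mul_le hw hw0 (by linarith) (by linarith)
  · have : -(1 / 2) < ν / k := (lt_div_iff₀ hk).2 (by linarith)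
    have : ν / k < 1 / 2 := (div_lt_iff₀ hk).2 (by linarith)
    exact integral_mul_integral_mul_one_sub_sq_rpow_le hw hw0 (by linarith) (by linarith)
      (by linarith)
end
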